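/- The two-qubit isotropic state $\rho = p\,\Psi^+ + (1-p)\frac{\mathbb{1}-\Psi^+}{3}$, for $p \in [0,1]$, is separable if and only if $p \le 1/2$; equivalently, written as $\rho = \lambda \Psi^+ + (1-\lambda)\mathbb{1}/4$ with $\lambda = (4p-1)/3$, it is separable iff $\lambda \le 1/3$. -/

import Mathlib

open scoped Matrix Kronecker ComplexOrder

/-- The two-qubit maximally entangled ket `(|00⟩ + |11⟩)/√2`. -/
noncomputable def psiVec : Fin 2 × Fin 2 → ℂ :=
  fun x => if x.1 = x.2 then ((1 / Real.sqrt 2 : ℝ) : ℂ) else 0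

/-- The projector `Ψ⁺` onto the two-qubit maximally entangled state. -/
noncomputable def PsiPlus : Matrix (Fin 2 × Fin 2) (Fin 2 × Fin 2) ℂ :=
  Matrix.vecMulVec psiVec (star ∘ psiVec)

/-- A two-qubit state is separable if it is a convex combination of product states. -/
def IsSeparableState (ρ : Matrix (Fin 2 × Fin 2) (Fin 2 × Fin 2) ℂ) : Prop :=
  ∃ (m : ℕ) (w : Fin m → ℝ) (A B : Fin m → Matrix (Fin 2) (Fin 2) ℂ),
    (∀ i, 0 ≤ w i) ∧ (∑ i, w i = 1) ∧
    (∀ i, (A i).PosSemidef ∧ (A i).trace = 1) ∧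
    (∀ i, (B i).PosSemidef ∧ (B i).trace = 1) ∧
    ρ = ∑ i, ((w i : ℝ) : ℂ) • (A i ⊗ₖ B i)

/-- The two-qubit isotropic state `p Ψ⁺ + (1-p)(𝟙 - Ψ⁺)/3`. -/
noncomputable def isoState (p : ℝ) : Matrix (Fin 2 × Fin 2) (Fin 2 × Fin 2) ℂ :=
  ((p : ℝ) : ℂ) • PsiPlus + (((1 - p) / 3 : ℝ) : ℂ) • ((1 : Matrix (Fin 2 × Fin 2) (Fin 2 × Fin 2) ℂ) - PsiPlus)

/-!
For `p ≤ 1/2` the state `isoState p` is a mixture of `isoState 0` and `isoState (1/2)`. Averaging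
over the six eigenprojectors `P` of the Pauli matrices (a complex projective 2-design) gives
`isoState (1/2) = (𝟙 + 2Ψ⁺)/6` as the mean of `P ⊗ Pᵀ`, and `isoState 0 = (𝟙 - Ψ⁺)/3` as the mean
of `P ⊗ (𝟙 - Pᵀ)`, so both are separable.

Conversely, a separable state has a positive semidefinite partial transpose (Peres), while the
partial transpose of `isoState p` has expectation `1 - 2p` in the singlet vector `|01⟩ - |10⟩`.
-/

open Matrix Complex

lemma PsiPlus_apply (i j : Fin 2 × Fin 2) :
    PsiPlus i j = if i.1 = i.2 ∧ j.1 = j.2 then 1 / 2 else 0 := by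
  have half : ((√2 : ℝ) : ℂ)⁻¹ * ((√2 : ℝ) : ℂ)⁻¹ = 2⁻¹ := by
    rw [← mul_inv, ← ofReal_mul, Real.mul_self_sqrt zero_le_two, ofReal_ofNat]
  by_cases hi : i.1 = i.2 <;> by_cases hj : j.1 = j.2 <;>
    simp [PsiPlus, vecMulVec_apply, psiVec, hi, hj, half]

lemma IsStarProjection.posSemidef {𝕜 n : Type*} [RCLike 𝕜] [Fintype n] {P : Matrix n n 𝕜}
    (hP : IsStarProjection P) : P.PosSemidef := by
  open scoped MatrixOrder in exact hP.nonneg.posSemidef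

lemma IsStarProjection.transpose {α n : Type*} [CommSemiring α] [StarRing α] [Fintype n]
    {P : Matrix n n α} (hP : IsStarProjection P) : IsStarProjection Pᵀ where
  isIdempotentElem := by rw [IsIdempotentElem, ← transpose_mul, hP.isIdempotentElem.eq]
  isSelfAdjoint := by
    change Pᵀᴴ = Pᵀ
    rw [conjTranspose_transpose_eq_transpose_conjTranspose]
    exact congrArg Matrix.transpose hP.isSelfAdjoint

noncomputable def pauliState : Fin 6 → Matrix (Fin 2) (Fin 2) ℂ :=
  ![!![1, 0; 0, 0], !![0, 0; 0, 1],
    !![1 / 2, 1 / 2; 1 / 2, 1 / 2], !![1 / 2, -1 / 2; -1 / 2, 1 / 2],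
    !![1 / 2, -I / 2; I / 2, 1 / 2], !![1 / 2, I / 2; -I / 2, 1 / 2]]

lemma pauliState_isStarProjection (k : Fin 6) : IsStarProjection (pauliState k) where
  isIdempotentElem := by
    fin_cases k <;> ext i j <;> fin_cases i <;> fin_cases j <;>
      simp [pauliState, mul_apply] <;> ring_nf <;> norm_num [I_sq]
  isSelfAdjoint := by
    fin_cases k <;> ext i j <;> fin_cases i <;> fin_cases j <;> simp [pauliState]

lemma pauliState_trace (k : Fin 6) : (pauliState k).trace = 1 := by
  fin_cases k <;> norm_num [pauliState, trace_fin_two]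

lemma isoState_half_eq_sum_kronecker :
    isoState (1 / 2) = ∑ k, ((1 / 6 : ℝ) : ℂ) • (pauliState k ⊗ₖ (pauliState k)ᵀ) := by
  ext ⟨a, b⟩ ⟨c, d⟩
  fin_cases a <;> fin_cases b <;> fin_cases c <;> fin_cases d <;>
    simp [isoState, PsiPlus_apply, pauliState, Fin.sum_univ_succ, Matrix.sum_apply, one_apply] <;>
    ring_nf <;> norm_num [I_sq]

lemma isoState_zero_eq_sum_kronecker :
    isoState 0 = ∑ k, ((1 / 6 : ℝ) : ℂ) • (pauliState k ⊗ₖ (1 - (pauliState k)ᵀ)) := by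
  ext ⟨a, b⟩ ⟨c, d⟩
  fin_cases a <;> fin_cases b <;> fin_cases c <;> fin_cases d <;>
    simp [isoState, PsiPlus_apply, pauliState, Fin.sum_univ_succ, Matrix.sum_apply, one_apply] <;>
    ring_nf <;> norm_num [I_sq]

lemma isSeparableState_isoState_half : IsSeparableState (isoState (1 / 2)) :=
  ⟨6, fun _ => 1 / 6, pauliState, fun k => (pauliState k)ᵀ, fun _ => by norm_num,
    by norm_num, fun k => ⟨(pauliState_isStarProjection k).posSemidef, pauliState_trace k⟩,
    fun k => ⟨(pauliState_isStarProjection k).transpose.posSemidef,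
      by rw [trace_transpose, pauliState_trace]⟩,
    isoState_half_eq_sum_kronecker⟩

lemma isSeparableState_isoState_zero : IsSeparableState (isoState 0) :=
  ⟨6, fun _ => 1 / 6, pauliState, fun k => 1 - (pauliState k)ᵀ, fun _ => by norm_num,
    by norm_num, fun k => ⟨(pauliState_isStarProjection k).posSemidef, pauliState_trace k⟩,
    fun k => ⟨(pauliState_isStarProjection k).transpose.one_sub.posSemidef,
      by rw [trace_sub, trace_transpose, pauliState_trace, trace_one]; norm_num⟩,
    isoState_zero_eq_sum_kronecker⟩

lemma IsSeparableState.convex_combination {ρ σ : Matrix (Fin 2 × Fin 2) (Fin 2 × Fin 2) ℂ}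
    (hρ : IsSeparableState ρ) (hσ : IsSeparableState σ) {t : ℝ} (ht0 : 0 ≤ t) (ht1 : t ≤ 1) :
    IsSeparableState (((1 - t : ℝ) : ℂ) • ρ + ((t : ℝ) : ℂ) • σ) := by
  obtain ⟨m, v, A, B, hv, hv1, hA, hB, rfl⟩ := hρ
  obtain ⟨n, w, C, D, hw, hw1, hC, hD, rfl⟩ := hσ
  refine ⟨m + n, Fin.append ((1 - t) • v) (t • w), Fin.append A C, Fin.append B D,
    Fin.addCases (by simpa using fun i => mul_nonneg (sub_nonneg.2 ht1) (hv i))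
      (by simpa using fun i => mul_nonneg ht0 (hw i)), ?_,
    Fin.addCases (by simpa using hA) (by simpa using hC),
    Fin.addCases (by simpa using hB) (by simpa using hD), ?_⟩
  · simp only [Fin.sum_univ_add, Fin.append_left, Fin.append_right, Pi.smul_apply, smul_eq_mul,
      ← Finset.mul_sum, hv1, hw1]
    ring
  · simp only [Fin.sum_univ_add, Fin.append_left, Fin.append_right, Finset.smul_sum, smul_smul,
      Pi.smul_apply, smul_eq_mul, ofReal_mul]

lemma isoState_eq_convex_combination (p : ℝ) :
    isoState p = ((1 - 2 * p : ℝ) : ℂ) • isoState 0 + ((2 * p : ℝ) : ℂ) • isoState (1 / 2) := by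
  simp only [isoState]
  push_cast
  module

lemma isSeparableState_isoState {p : ℝ} (hp0 : 0 ≤ p) (hp : p ≤ 1 / 2) :
    IsSeparableState (isoState p) := by
  rw [isoState_eq_convex_combination]
  exact isSeparableState_isoState_zero.convex_combination isSeparableState_isoState_half
    (by linarith) (by linarith)

namespace Matrix

variable {m n α : Type*} [CommSemiring α]

def partialTranspose : Matrix (m × n) (m × n) α →ₗ[α] Matrix (m × n) (m × n) α where
  toFun M := of fun i j => M (i.1, j.2) (j.1, i.2)
  map_add' _ _ := rfl
  map_smul' _ _ := rfl

@[simp]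
lemma partialTranspose_apply (M : Matrix (m × n) (m × n) α) (i j : m × n) :
    partialTranspose M i j = M (i.1, j.2) (j.1, i.2) :=
  rfl

lemma partialTranspose_kronecker (A : Matrix m m α) (B : Matrix n n α) :
    partialTranspose (A ⊗ₖ B) = A ⊗ₖ Bᵀ :=
  rfl

end Matrix

lemma IsSeparableState.posSemidef_partialTranspose
    {ρ : Matrix (Fin 2 × Fin 2) (Fin 2 × Fin 2) ℂ} (h : IsSeparableState ρ) :
    (partialTranspose ρ).PosSemidef := by
  obtain ⟨m, w, A, B, hw, -, hA, hB, rfl⟩ := h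
  rw [map_sum]
  refine posSemidef_sum _ fun i _ => ?_
  rw [map_smul, partialTranspose_kronecker]
  exact ((hA i).1.kronecker (hB i).1.transpose).smul (zero_le_real.2 (hw i))

def singletVec : Fin 2 × Fin 2 → ℂ := fun x => ![![0, 1], ![-1, 0]] x.1 x.2

lemma star_singletVec_dotProduct_partialTranspose_isoState_mulVec (p : ℝ) :
    star singletVec ⬝ᵥ (partialTranspose (isoState p) *ᵥ singletVec) = ((1 - 2 * p : ℝ) : ℂ) := by
  simp [singletVec, dotProduct, mulVec, Fintype.sum_prod_type, isoState, PsiPlus_apply, one_apply]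
  ring

lemma le_half_of_isSeparableState_isoState {p : ℝ} (h : IsSeparableState (isoState p)) :
    p ≤ 1 / 2 := by
  have := h.posSemidef_partialTranspose.dotProduct_mulVec_nonneg singletVec
  rw [star_singletVec_dotProduct_partialTranspose_isoState_mulVec, zero_le_real] at this
  linarith

lemma isSeparableState_isoState_iff {p : ℝ} (hp0 : 0 ≤ p) :
    IsSeparableState (isoState p) ↔ p ≤ 1 / 2 :=
  ⟨le_half_of_isSeparableState_isoState, isSeparableState_isoState hp0⟩

lemma smul_PsiPlus_add_smul_one_eq_isoState (p : ℝ) :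
    (((4 * p - 1) / 3 : ℝ) : ℂ) • PsiPlus +
      (((1 - (4 * p - 1) / 3) / 4 : ℝ) : ℂ) • (1 : Matrix (Fin 2 × Fin 2) (Fin 2 × Fin 2) ℂ) =
      isoState p := by
  simp only [isoState]
  push_cast
  module

theorem isotropic_separability_general (p : ℝ) (hp0 : 0 ≤ p) :
    (IsSeparableState (isoState p) ↔ p ≤ 1 / 2) ∧
    (IsSeparableState ((((4 * p - 1) / 3 : ℝ) : ℂ) • PsiPlus +
        (((1 - (4 * p - 1) / 3) / 4 : ℝ) : ℂ) • (1 : Matrix (Fin 2 × Fin 2) (Fin 2 × Fin 2) ℂ)) ↔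
      (4 * p - 1) / 3 ≤ 1 / 3) := by
  rw [smul_PsiPlus_add_smul_one_eq_isoState, isSeparableState_isoState_iff hp0]
  exact ⟨.rfl, by constructor <;> intro <;> linarith⟩

theorem isotropic_separability (p : ℝ) (hp0 : 0 ≤ p) (hp1 : p ≤ 1) :
    (IsSeparableState (isoState p) ↔ p ≤ 1 / 2) ∧
    (IsSeparableState ((((4 * p - 1) / 3 : ℝ) : ℂ) • PsiPlus +
        (((1 - (4 * p - 1) / 3) / 4 : ℝ) : ℂ) • (1 : Matrix (Fin 2 × Fin 2) (Fin 2 × Fin 2) ℂ)) ↔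
      (4 * p - 1) / 3 ≤ 1 / 3) :=
  isotropic_separability_general p hp0
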